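/- arXiv:1707.01328 — 6 statements merged into one kernel-verified Lean document; each statement's English description precedes it below -/
import Mathlib

section
/- Let X be a finitely generated free abelian group (lattice) and σ an automorphism of X of finite order n. If σ permutes a basis of X, then Ker(1 + σ + σ² + ... + σ^{n-1}) = (σ - 1)X. -/
/-!
Let `r` pick one point on each cycle of `e` and let `φ` be the endomorphism `b i ↦ b (r i)`.
Each `b i - b (r i)` lies in `(σ - 1) X`, so `x - φ x ∈ (σ - 1) X` for every `x`; and `φ σ = φ`,
so `φ N = n φ` for the norm `N = ∑ σ^i`. Hence `N x = 0` forces `n φ x = 0`, so `φ x = 0` because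
`X` is torsion-free, and `x ∈ (σ - 1) X`. Conversely `N (σ - 1) = σ^n - 1 = 0`.
-/

open Finset Equiv Perm

theorem mul_geom_sum_of_mul_eq {S : Type*} [Semiring S] {a f : S} (h : a * f = a) (n : ℕ) :
    a * ∑ i ∈ range n, f ^ i = n • a := by
  have hpow (i : ℕ) : a * f ^ i = a := by
    induction i with
    | zero => rw [pow_zero, mul_one]
    | succ i ih => rw [pow_succ, ← mul_assoc, ih, h]
  simp only [Finset.mul_sum, hpow, sum_const, card_range]

theorem Module.End.range_sub_one_le_ker_geom_sum {R X : Type*} [Semiring R] [AddCommGroup X]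
    [Module R X] {f : Module.End R X} {n : ℕ} (hf : f ^ n = 1) :
    LinearMap.range (f - 1) ≤ LinearMap.ker (∑ i ∈ range n, f ^ i) := by
  rintro _ ⟨x, rfl⟩
  rw [LinearMap.mem_ker, ← Module.End.mul_apply, geom_sum_mul, hf, sub_self, LinearMap.zero_apply]

namespace Equiv.Perm

variable {ι : Type*}

noncomputable def cycleRep (e : Perm ι) (i : ι) : ι :=
  (Quotient.mk (SameCycle.setoid e) i).out

theorem sameCycle_cycleRep (e : Perm ι) (i : ι) : e.SameCycle (e.cycleRep i) i :=
  Quotient.mk_out (s := SameCycle.setoid e) i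

theorem cycleRep_apply (e : Perm ι) (i : ι) : e.cycleRep (e i) = e.cycleRep i :=
  congrArg Quotient.out (Quotient.sound (s := SameCycle.setoid e) (sameCycle_apply_left.2 .rfl))

end Equiv.Perm

namespace Module.Basis

theorem sub_mem_range_sub_one_of_sameCycle {R X ι : Type*} [Ring R] [AddCommGroup X]
    [Module R X] (b : Basis ι R X) {f : Module.End R X} {e : Perm ι}
    (hperm : ∀ i, f (b i) = b (e i)) {i j : ι} (h : e.SameCycle i j) :
    b j - b i ∈ LinearMap.range (f - 1) := by
  obtain ⟨k, rfl⟩ := h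
  have step (y : ι) : b (e y) - b y ∈ LinearMap.range (f - 1) :=
    ⟨b y, by rw [LinearMap.sub_apply, hperm, Module.End.one_apply]⟩
  induction k using Int.induction_on with
  | zero => simp
  | succ k ih =>
    rw [add_comm, zpow_add, zpow_one, Perm.mul_apply, ← sub_add_sub_cancel _ (b ((e ^ k) i))]
    exact add_mem (step _) ih
  | pred k ih =>
    have hstep := step ((e ^ (-(k : ℤ) - 1)) i)
    rw [← Perm.mul_apply, ← zpow_one_add, add_sub_cancel] at hstep
    rw [← sub_sub_sub_cancel_left _ _ (b ((e ^ (-(k : ℤ))) i))]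
    exact sub_mem ih hstep

variable {R X ι : Type*} [CommRing R] [AddCommGroup X] [Module R X]
  (b : Basis ι R X) {f : Module.End R X} {e : Perm ι}

theorem range_one_sub_constr_cycleRep_le (hperm : ∀ i, f (b i) = b (e i)) :
    LinearMap.range (1 - b.constr R (b ∘ e.cycleRep)) ≤ LinearMap.range (f - 1) := by
  rw [LinearMap.range_eq_map, ← b.span_eq, Submodule.map_span_le]
  rintro _ ⟨i, rfl⟩
  simpa using b.sub_mem_range_sub_one_of_sameCycle hperm (e.sameCycle_cycleRep i)

theorem constr_cycleRep_mul (hperm : ∀ i, f (b i) = b (e i)) :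
    b.constr R (b ∘ e.cycleRep) * f = b.constr R (b ∘ e.cycleRep) :=
  b.ext fun i => by simp [hperm, e.cycleRep_apply]

theorem ker_geom_sum_eq_range_sub_one [IsAddTorsionFree X] (hperm : ∀ i, f (b i) = b (e i))
    {n : ℕ} (hn : n ≠ 0) (hf : f ^ n = 1) :
    LinearMap.ker (∑ i ∈ range n, f ^ i) = LinearMap.range (f - 1) := by
  refine le_antisymm (fun x hx => ?_) (Module.End.range_sub_one_le_ker_geom_sum hf)
  set φ := b.constr R (b ∘ e.cycleRep)
  have hφx : φ x = 0 := by
    refine IsAddTorsionFree.nsmul_right_injective hn (?_ : n • φ x = n • 0)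
    rw [smul_zero, ← LinearMap.smul_apply, ← mul_geom_sum_of_mul_eq (b.constr_cycleRep_mul hperm),
      Module.End.mul_apply, hx, map_zero]
  have hx' := b.range_one_sub_constr_cycleRep_le hperm (LinearMap.mem_range_self _ x)
  rwa [LinearMap.sub_apply, Module.End.one_apply, hφx, sub_zero] at hx'

end Module.Basis

theorem ker_norm_eq_range_sub_one_of_permutes_basis_general
    {X : Type*} [AddCommGroup X] [Module ℤ X]
    (σ : X ≃ₗ[ℤ] X) (n : ℕ) (hn : 0 < n) (hord : orderOf σ = n)
    {ι : Type*} (b : Module.Basis ι ℤ X) (e : Equiv.Perm ι)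
    (hperm : ∀ i, σ (b i) = b (e i)) :
    LinearMap.ker (∑ i ∈ Finset.range n, ((σ ^ i : X ≃ₗ[ℤ] X) : X →ₗ[ℤ] X))
      = LinearMap.range ((σ : X →ₗ[ℤ] X) - LinearMap.id) := by
  have := b.isTorsionFree
  have : IsAddTorsionFree X := .of_isTorsionFree ℤ X
  have hcoe (i : ℕ) : ((σ ^ i : X ≃ₗ[ℤ] X) : Module.End ℤ X) = (σ : Module.End ℤ X) ^ i :=
    map_pow LinearEquiv.automorphismGroup.toLinearMapMonoidHom σ i
  have hσn : (σ : Module.End ℤ X) ^ n = 1 := by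
    rw [← hcoe, ← hord, pow_orderOf_eq_one]
    rfl
  simp only [hcoe]
  exact b.ker_geom_sum_eq_range_sub_one hperm hn.ne' hσn

/-- Let `X` be a finitely generated free abelian group (lattice) and
`σ` an automorphism of `X` of finite order `n`.  If `σ` permutes a basis of `X`, then
`Ker (1 + σ + σ² + ⋯ + σ^{n-1}) = (σ - 1) X`. -/
theorem ker_norm_eq_range_sub_one_of_permutes_basis
    {X : Type*} [AddCommGroup X] [Module ℤ X] [Module.Free ℤ X] [Module.Finite ℤ X]
    (σ : X ≃ₗ[ℤ] X) (n : ℕ) (hn : 0 < n) (hord : orderOf σ = n)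
    {ι : Type*} (b : Module.Basis ι ℤ X) (e : Equiv.Perm ι)
    (hperm : ∀ i, σ (b i) = b (e i)) :
    LinearMap.ker (∑ i ∈ Finset.range n, ((σ ^ i : X ≃ₗ[ℤ] X) : X →ₗ[ℤ] X))
      = LinearMap.range ((σ : X →ₗ[ℤ] X) - LinearMap.id) :=
  ker_norm_eq_range_sub_one_of_permutes_basis_general σ n hn hord b e hperm
end

section
/- Let Y and X be lattices of finite rank in perfect duality over ℤ, and let σ be a finite-order automorphism of X with dual action on Y preserving the pairing. Let π : X ⊗ ℚ → X ⊗ ℚ be the averaging map x ↦ (1/n)·Σ_{i=1}^{n} σ^i(x), where n is the order of σ. Then the restriction of the ℚ-bilinear pairing to (Y ⊗ ℚ)^σ × (X ⊗ ℚ)^σ makes the lattice Y^σ (the σ-fixed points in Y) and the lattice π(X) dual to each other: an element y ∈ (Y ⊗ ℚ)^σ pairs integrally with all of π(X) if and only if y ∈ Y^σ. -/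
/-- Let `Y ⊂ W` and `X ⊂ V` be lattices of finite rank in perfect
duality over `ℤ` (with respect to a `ℚ`-bilinear pairing `B`), and let `σ`, `τ` be
compatible finite-order automorphisms of order `n` preserving the pairing and the
lattices.  Let `π : V → V` be the averaging map `x ↦ (1/n) ∑_{i=1}^{n} σ^i x`.  Then a
`τ`-fixed vector `y` pairs integrally with all of `π(X)` if and only if `y ∈ Y`; that
is, the lattices `Y^τ` and `π(X)` are dual to each other. -/
theorem fixed_lattice_dual_to_averaged_lattice
    {V W : Type*} [AddCommGroup V] [Module ℚ V] [AddCommGroup W] [Module ℚ W]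
    [FiniteDimensional ℚ V] [FiniteDimensional ℚ W]
    (B : W →ₗ[ℚ] V →ₗ[ℚ] ℚ)
    (hBperf : Function.Bijective fun (y : W) => B y)   -- perfect ℚ-duality
    (σ : V ≃ₗ[ℚ] V) (τ : W ≃ₗ[ℚ] W) (n : ℕ) (hn : 0 < n)
    (hσ : σ ^ n = 1) (hτ : τ ^ n = 1)
    (hcompat : ∀ (y : W) (x : V), B (τ y) (σ x) = B y x)
    (X : Submodule ℤ V) (Y : Submodule ℤ W)
    (hXσ : ∀ x ∈ X, σ x ∈ X) (hYτ : ∀ y ∈ Y, τ y ∈ Y)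
    -- `X` and `Y` are in perfect duality over `ℤ`:
    (hperfect : ∀ y : W, ((∀ x ∈ X, ∃ m : ℤ, B y x = (m : ℚ)) ↔ y ∈ Y)) :
    ∀ y : W, τ y = y →
      ((∀ x ∈ X, ∃ m : ℤ,
          B y ((n : ℚ)⁻¹ • ∑ i ∈ Finset.range n, (σ ^ (i + 1)) x) = (m : ℚ))
        ↔ y ∈ Y) := by
  intro y hy
  have key : ∀ (k : ℕ) (x : V), B y ((σ ^ k) x) = B y x := by
    intro k
    induction k with
    | zero => intro x; simp
    | succ k ih =>
      intro x
      have h1 : (σ ^ (k + 1)) x = (σ ^ k) (σ x) := by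
        rw [pow_succ]; rfl
      rw [h1, ih, ← hcompat y x, hy]
  have havg : ∀ x : V,
      B y ((n : ℚ)⁻¹ • ∑ i ∈ Finset.range n, (σ ^ (i + 1)) x) = B y x := by
    intro x
    rw [map_smul, map_sum]
    simp only [key, Finset.sum_const, Finset.card_range, smul_eq_mul, nsmul_eq_mul]
    have hn' : (n : ℚ) ≠ 0 := Nat.cast_ne_zero.mpr hn.ne'
    field_simp
  simp only [havg]
  exact hperfect y
end

section
/- Let T be a torus over an algebraically closed field k, and σ an algebraic automorphism of T of finite order n. Let N_σ : T → T be the map t ↦ t·σ(t)·σ²(t)···σ^{n-1}(t). Then the image of N_σ is equal to the identity component (T^σ)⁰ of the fixed point subgroup T^σ. -/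
/-! We model a torus `T` over an algebraically closed field `k` by its group of
points `Hom(X, kˣ)`, where `X` is the (finitely generated free) character lattice.
A finite-order algebraic automorphism of `T` corresponds to a finite-order
automorphism `σ` of `X`, acting on points by precomposition.  The identity component
of a diagonalizable group of points is its maximal divisible subgroup. -/

/-- Points of the torus with character lattice `X` over `k`. -/
abbrev TorusPts (X : Type*) [AddCommGroup X] (k : Type*) [Field k] :=
  X →+ Additive kˣ

/-- Precomposition with an endomorphism of the character lattice, as a group
endomorphism of the points of the torus. -/
def precomp {X : Type*} [AddCommGroup X] (k : Type*) [Field k] (f : X →+ X) :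
    TorusPts X k →+ TorusPts X k where
  toFun t := t.comp f
  map_zero' := by ext x; simp
  map_add' t s := by ext x; simp

/-- The subgroup of `σ`-fixed points of the torus. -/
def fixedSub {X : Type*} [AddCommGroup X] (k : Type*) [Field k] (σ : X →+ X) :
    AddSubgroup (TorusPts X k) :=
  AddMonoidHom.ker (precomp k σ - AddMonoidHom.id _)

/-- The maximal divisible subgroup of an abelian group: the identity component of a
diagonalizable algebraic group over an algebraically closed field, seen on points. -/
def divPart (A : Type*) [AddCommGroup A] : AddSubgroup A :=
  ⨆ H ∈ {H : AddSubgroup A | ∀ m : ℕ, 0 < m → ∀ x ∈ H, ∃ y ∈ H, m • y = x}, H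

/-!
The norm map lands in the fixed points because `σ` permutes its summands cyclically, and on a
fixed point it is multiplication by `n`.  Hence `N_σ(T) ⊇ n • (T^σ)⁰ = (T^σ)⁰`, the identity
component being divisible.  Conversely `T = Hom(X, kˣ)` is divisible, since `kˣ` is divisible,
hence an injective `ℤ`-module, and `X` is torsion free; so its image under `N_σ` is a divisible
subgroup of `T^σ`, contained in `(T^σ)⁰`.
-/

section DivPart

variable {A : Type*} [AddCommGroup A]

lemma le_divPart {H : AddSubgroup A} (hH : ∀ m : ℕ, 0 < m → ∀ x ∈ H, ∃ y ∈ H, m • y = x) :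
    H ≤ divPart A :=
  le_iSup₂ (f := fun (H : AddSubgroup A) (_ : H ∈ _) => H) H hH

lemma exists_nsmul_eq_of_mem_divPart {m : ℕ} (hm : 0 < m) {x : A} (hx : x ∈ divPart A) :
    ∃ y ∈ divPart A, m • y = x := by
  rw [divPart, iSup_subtype'] at hx
  refine AddSubgroup.iSup_induction (C := fun a => ∃ y ∈ divPart A, m • y = a) _ hx
    (fun H z hz => ?_) ⟨0, zero_mem _, smul_zero m⟩
    (fun a b ⟨y, hy, hya⟩ ⟨z, hz, hzb⟩ => ⟨y + z, add_mem hy hz, by rw [smul_add, hya, hzb]⟩)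
  obtain ⟨y, hy, hyz⟩ := H.2 m hm z hz
  exact ⟨y, le_divPart H.2 hy, hyz⟩

lemma AddMonoidHom.range_le_divPart {B : Type*} [AddCommGroup B] (f : B →+ A)
    (hB : ∀ m : ℕ, 0 < m → ∀ b : B, ∃ c, m • c = b) : f.range ≤ divPart A := by
  refine le_divPart fun m hm _ ⟨b, hb⟩ => ?_
  obtain ⟨c, rfl⟩ := hB m hm b
  exact ⟨f c, ⟨c, rfl⟩, by rw [← hb, map_nsmul]⟩

end DivPart

lemma IsAlgClosed.baer_additive_units (k : Type*) [Field k] [IsAlgClosed k] :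
    Module.Baer ℤ (Additive kˣ) := by
  have hsurj {m : ℕ} (hm : m ≠ 0) : Function.Surjective fun a : Additive kˣ => m • a := by
    intro a
    obtain ⟨z, hz⟩ := IsAlgClosed.exists_pow_nat_eq (a.toMul : k) (Nat.pos_of_ne_zero hm)
    have hz0 : z ≠ 0 := by
      rintro rfl
      exact a.toMul.ne_zero (by rw [← hz, zero_pow hm])
    exact ⟨Additive.ofMul (Units.mk0 z hz0), Additive.toMul.injective (Units.ext (by simp [hz]))⟩
  let : DivisibleBy (Additive kˣ) ℕ := divisibleByOfSMulRightSurj _ _ hsurj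
  let : DivisibleBy (Additive kˣ) ℤ := AddGroup.divisibleByIntOfDivisibleByNat _
  exact Module.Baer.of_divisible _

/-- Multiplication by `m` is injective on a torsion-free group, so every homomorphism into an
injective group extends along it. -/
lemma AddMonoidHom.exists_nsmul_eq_of_baer {M Q : Type*} [AddCommGroup M] [IsAddTorsionFree M]
    [AddCommGroup Q] (hQ : Module.Baer ℤ Q) (t : M →+ Q) {m : ℕ} (hm : 0 < m) :
    ∃ t' : M →+ Q, m • t' = t := by
  obtain ⟨t', ht'⟩ := hQ.extension_property_addMonoidHom (m • AddMonoidHom.id M)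
    (nsmul_right_injective hm.ne') t
  exact ⟨t', by rw [← ht']; ext; simp⟩

lemma Finset.sum_range_shift_eq_of_eq {M : Type*} [AddCommMonoid M] (f : ℕ → M) {n : ℕ}
    (h : f n = f 0) : ∑ i ∈ range n, f (i + 1) = ∑ i ∈ range n, f i := by
  cases n with
  | zero => simp
  | succ n => rw [sum_range_succ, h, sum_range_succ']

section Norm

variable {X : Type*} [AddCommGroup X] {k : Type*} [Field k]

lemma mem_fixedSub_iff {f : X →+ X} {t : TorusPts X k} :
    t ∈ fixedSub k f ↔ ∀ x, t (f x) = t x := by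
  rw [fixedSub, AddMonoidHom.mem_ker, AddMonoidHom.sub_apply, AddMonoidHom.id_apply, sub_eq_zero]
  exact AddMonoidHom.ext_iff

variable (k) in
/-- The norm map `N_σ t = t ⋅ σ(t) ⋯ σ^{n-1}(t)`. -/
def normMap (σ : AddAut X) (n : ℕ) : TorusPts X k →+ TorusPts X k :=
  ∑ i ∈ Finset.range n, precomp k ((i • σ : AddAut X) : X →+ X)

lemma normMap_apply_apply (σ : AddAut X) (n : ℕ) (t : TorusPts X k) (x : X) :
    normMap k σ n t x = ∑ i ∈ Finset.range n, t ((i • σ) x) := by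
  simp only [normMap, AddMonoidHom.finsetSum_apply]
  rfl

lemma normMap_mem_fixedSub {σ : AddAut X} {n : ℕ} (hσ : n • σ = 0) (t : TorusPts X k) :
    normMap k σ n t ∈ fixedSub k (σ : X →+ X) := by
  refine mem_fixedSub_iff.2 fun x => ?_
  have hshift (i : ℕ) : (i • σ) ((σ : X →+ X) x) = ((i + 1) • σ) x := by rw [succ_nsmul]; rfl
  simp only [normMap_apply_apply, hshift]
  exact Finset.sum_range_shift_eq_of_eq (fun i => t ((i • σ) x)) (by rw [hσ, zero_nsmul])

lemma normMap_eq_nsmul_of_mem_fixedSub {σ : AddAut X} (n : ℕ) {t : TorusPts X k}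
    (ht : t ∈ fixedSub k (σ : X →+ X)) : normMap k σ n t = n • t := by
  have hpow (i : ℕ) (x : X) : t ((i • σ) x) = t x := by
    induction i with
    | zero => rfl
    | succ i ih => rw [succ_nsmul', AddAut.add_apply, ← ih]; exact mem_fixedSub_iff.1 ht _
  ext x
  simp [normMap_apply_apply, hpow]

end Norm

theorem range_norm_eq_identityComponent_fixed_general
    {k : Type*} [Field k] [IsAlgClosed k]
    {X : Type*} [AddCommGroup X] [Module.Free ℤ X]
    (σ : AddAut X) (n : ℕ) (hn : 0 < n) (hord : addOrderOf σ = n) :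
    AddMonoidHom.range
        (∑ i ∈ Finset.range n, precomp k ((i • σ : AddAut X) : X →+ X))
      = AddSubgroup.map (fixedSub k ((σ : AddAut X) : X →+ X)).subtype
          (divPart (fixedSub k ((σ : AddAut X) : X →+ X))) := by
  have : IsAddTorsionFree X := .of_isTorsionFree ℤ X
  set F := fixedSub k ((σ : AddAut X) : X →+ X)
  let N : TorusPts X k →+ F :=
    (normMap k σ n).codRestrict F (normMap_mem_fixedSub (hord ▸ addOrderOf_nsmul_eq_zero σ))
  have hN : N.range = divPart F := by
    refine le_antisymm (N.range_le_divPart fun m hm t =>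
      t.exists_nsmul_eq_of_baer (IsAlgClosed.baer_additive_units k) hm) fun v hv => ?_
    obtain ⟨w, -, rfl⟩ := exists_nsmul_eq_of_mem_divPart hn hv
    exact ⟨w, Subtype.ext (normMap_eq_nsmul_of_mem_fixedSub n w.2)⟩
  rw [← hN, ← AddMonoidHom.range_comp]
  rfl

/-- Let `T` be a torus over an algebraically closed field `k` and `σ`
an algebraic automorphism of `T` of finite order `n`.  Then the image of the norm map
`N_σ : t ↦ t ⋅ σ(t) ⋯ σ^{n-1}(t)` equals the identity component `(T^σ)⁰` of the fixed
point subgroup `T^σ`. -/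
theorem range_norm_eq_identityComponent_fixed
    {k : Type*} [Field k] [IsAlgClosed k]
    {X : Type*} [AddCommGroup X] [Module.Free ℤ X] [Module.Finite ℤ X]
    (σ : AddAut X) (n : ℕ) (hn : 0 < n) (hord : addOrderOf σ = n) :
    AddMonoidHom.range
        (∑ i ∈ Finset.range n, precomp k ((i • σ : AddAut X) : X →+ X))
      = AddSubgroup.map (fixedSub k ((σ : AddAut X) : X →+ X)).subtype
          (divPart (fixedSub k ((σ : AddAut X) : X →+ X))) :=
  range_norm_eq_identityComponent_fixed_general σ n hn hord
end

section
/- Let T be a torus with a finite-order automorphism σ of order n. Then the quotient map T → T/[T,σ] induces: (a) an isomorphism X(T/[T,σ]) ≅ X(T)^σ (the σ-invariant characters); (b) an isomorphism π(Y(T)) ≅ Y(T/[T,σ]), where π(y) = (1/n)Σᵢ σ^i(y); and (c) under these identifications, the natural duality between X(T/[T,σ]) and Y(T/[T,σ]) is the restriction of the ℚ-linear extension of the duality between X(T) and Y(T). -/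
def commSub {X : Type*} [AddCommGroup X] (k : Type*) [Field k] (σ : X →+ X) :
    AddSubgroup (TorusPts X k) :=
  AddMonoidHom.range (precomp k σ - AddMonoidHom.id _)

def cochar {X : Type*} [AddCommGroup X] [Module ℤ X] {k : Type*} [Field k]
    (y : X →ₗ[ℤ] ℤ) (lam : kˣ) : TorusPts X k where
  toFun χ := Additive.ofMul (lam ^ (y χ))
  map_zero' := by simp
  map_add' χ χ' := by simp [map_add, zpow_add]

/-! Since `kˣ` is divisible, it is an injective `ℤ`-module, so a point `t : X →+ kˣ` of `T` lies
in `[T,σ] = {s ∘ σ - s}` exactly when it vanishes on the fixed lattice `X^σ = ker (σ - 1)`.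
This gives (a), because the points `cochar y λ` separate characters: `X` is projective and
`λ ↦ λ ^ m` is nontrivial on `kˣ` for `m ≠ 0`. For (b), two cocharacters agree modulo `[T,σ]`
iff they agree on `X^σ`; since the norm `∑ σ^i` maps `X` into `X^σ` and acts on `X^σ` as
multiplication by `n`, this happens iff they agree after composing with the norm. -/

open Finset

section Units

variable {k : Type*} [Field k]

theorem forall_units_zpow_eq_one_iff [Infinite k] {m : ℤ} :
    (∀ lam : kˣ, lam ^ m = 1) ↔ m = 0 := by
  refine ⟨fun h => ?_, fun hm _ => by rw [hm, zpow_zero]⟩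
  classical
  by_contra hm
  have hm' : 0 < m.natAbs := Int.natAbs_pos.mpr hm
  obtain ⟨x, hx⟩ :=
    Infinite.exists_notMem_finset (insert 0 (Polynomial.nthRoots m.natAbs (1 : k)).toFinset)
  rw [mem_insert, Multiset.mem_toFinset, Polynomial.mem_nthRoots hm', not_or] at hx
  apply hx.2
  simpa using congrArg Units.val (pow_natAbs_eq_one.mpr (h (Units.mk0 x hx.1)))

theorem IsAlgClosed.exists_units_zpow_eq [IsAlgClosed k] (a : kˣ) {n : ℤ} (hn : n ≠ 0) :
    ∃ z : kˣ, z ^ n = a := by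
  obtain ⟨z, hz⟩ := IsAlgClosed.exists_pow_nat_eq (a : k) (Int.natAbs_pos.mpr hn)
  have hz0 : z ≠ 0 := by
    rintro rfl
    exact a.ne_zero (by rw [← hz, zero_pow (Int.natAbs_pos.mpr hn).ne'])
  have hu : Units.mk0 z hz0 ^ n.natAbs = a := Units.ext (by simpa using hz)
  rcases Int.natAbs_eq n with h | h
  · exact ⟨Units.mk0 z hz0, by rw [h, zpow_natCast, hu]⟩
  · exact ⟨(Units.mk0 z hz0)⁻¹, by rw [h, zpow_neg, zpow_natCast, inv_pow, inv_inv, hu]⟩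

noncomputable instance IsAlgClosed.divisibleByAdditiveUnits [IsAlgClosed k] :
    DivisibleBy (Additive kˣ) ℤ :=
  divisibleByOfSMulRightSurj _ _ fun hn a =>
    let ⟨z, hz⟩ := IsAlgClosed.exists_units_zpow_eq a.toMul hn
    ⟨Additive.ofMul z, congrArg Additive.ofMul hz⟩

end Units

theorem AddMonoidHom.exists_comp_eq_of_ker_le {X Y A : Type*} [AddCommGroup X] [AddCommGroup Y]
    [AddCommGroup A] [DivisibleBy A ℤ] (f : X →+ Y) (t : X →+ A) (h : f.ker ≤ t.ker) :
    ∃ s : Y →+ A, s.comp f = t := by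
  obtain ⟨s, hs⟩ := (Module.Baer.of_divisible A).extension_property_addMonoidHom
    (QuotientAddGroup.kerLift f) (QuotientAddGroup.kerLift_injective f)
    (QuotientAddGroup.lift f.ker t h)
  exact ⟨s, AddMonoidHom.ext fun x => DFunLike.congr_fun hs (x : X ⧸ f.ker)⟩

section Torus

variable {k : Type*} [Field k] {X : Type*} [AddCommGroup X]

@[simp]
theorem precomp_apply (f : X →+ X) (t : TorusPts X k) (x : X) : precomp k f t x = t (f x) := rfl

theorem cochar_apply (y : X →ₗ[ℤ] ℤ) (lam : kˣ) (χ : X) :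
    cochar y lam χ = Additive.ofMul (lam ^ y χ) := rfl

theorem cochar_sub (y y' : X →ₗ[ℤ] ℤ) (lam : kˣ) :
    cochar (y - y') lam = cochar y lam - cochar y' lam := by
  ext χ : 1
  rw [AddMonoidHom.sub_apply, cochar_apply, cochar_apply, cochar_apply, LinearMap.sub_apply,
    zpow_sub, ← div_eq_mul_inv, ofMul_div]

theorem mem_commSub_iff [IsAlgClosed k] (σ : X →+ X) (t : TorusPts X k) :
    t ∈ commSub k σ ↔ ∀ x, σ x = x → t x = 0 := by
  constructor
  · rintro ⟨s, rfl⟩ x hx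
    simp [hx]
  · intro h
    obtain ⟨s, hs⟩ := (σ - AddMonoidHom.id X).exists_comp_eq_of_ker_le t
      fun x hx => h x (sub_eq_zero.mp hx)
    exact ⟨s, by ext x; simp [← hs]⟩

theorem cochar_mem_commSub_iff [IsAlgClosed k] (σ : X →+ X) (y : X →ₗ[ℤ] ℤ) (lam : kˣ) :
    cochar y lam ∈ commSub k σ ↔ ∀ χ, σ χ = χ → lam ^ y χ = 1 := by
  simp only [mem_commSub_iff, cochar_apply, ofMul_eq_zero]

theorem forall_cochar_mem_commSub_iff [IsAlgClosed k] (σ : X →+ X) (y : X →ₗ[ℤ] ℤ) :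
    (∀ lam : kˣ, cochar y lam ∈ commSub k σ) ↔ ∀ χ, σ χ = χ → y χ = 0 := by
  simp_rw [cochar_mem_commSub_iff]
  exact ⟨fun h χ hχ => forall_units_zpow_eq_one_iff.mp fun lam => h lam χ hχ,
    fun h lam χ hχ => by rw [h χ hχ, zpow_zero]⟩

theorem forall_mem_commSub_apply_eq_zero_iff [IsAlgClosed k] [Module.Projective ℤ X]
    (σ : X →+ X) (χ : X) : (∀ t ∈ commSub k σ, t χ = 0) ↔ σ χ = χ := by
  refine ⟨fun h => ?_, fun hχ t ht => (mem_commSub_iff σ t).mp ht χ hχ⟩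
  rw [← sub_eq_zero, ← Module.forall_dual_apply_eq_zero_iff ℤ]
  intro y
  rw [← forall_units_zpow_eq_one_iff (k := k)]
  intro lam
  have := h _ ⟨cochar y lam, rfl⟩
  rw [map_sub, zpow_sub, ← div_eq_mul_inv]
  rwa [AddMonoidHom.sub_apply, AddMonoidHom.sub_apply, precomp_apply, AddMonoidHom.id_apply,
    cochar_apply, cochar_apply, ← ofMul_div, ofMul_eq_zero] at this

theorem mk_cochar_eq_mk_cochar_iff [IsAlgClosed k] (σ : X →+ X) (y y' : X →ₗ[ℤ] ℤ) :
    (∀ lam : kˣ, (QuotientAddGroup.mk (cochar y lam) : TorusPts X k ⧸ commSub k σ) =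
      QuotientAddGroup.mk (cochar y' lam)) ↔ ∀ χ, σ χ = χ → y χ = y' χ := by
  have hsub (lam : kˣ) : -cochar y lam + cochar y' lam = cochar (y' - y) lam := by
    rw [cochar_sub]
    abel
  simp_rw [QuotientAddGroup.eq, hsub, forall_cochar_mem_commSub_iff, LinearMap.sub_apply,
    sub_eq_zero, eq_comm]

end Torus

namespace AddAut

variable {X M : Type*}

section AddCommMonoid

variable [AddCommMonoid X] [AddCommMonoid M] (σ : AddAut X)

theorem nsmul_apply_of_apply_eq {χ : X} (hχ : σ χ = χ) (i : ℕ) : (i • σ) χ = χ := by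
  induction i with
  | zero => rfl
  | succ i ih => rw [succ_nsmul, add_apply, hχ, ih]

theorem sum_range_apply_nsmul_apply_of_apply_eq (f : X → M) {χ : X} (hχ : σ χ = χ) (n : ℕ) :
    ∑ i ∈ range n, f ((i • σ) χ) = n • f χ := by
  simp only [σ.nsmul_apply_of_apply_eq hχ, sum_const, card_range]

theorem apply_sum_range_nsmul_apply {n : ℕ} (hσ : n • σ = 0) (χ : X) :
    σ (∑ i ∈ range n, (i • σ) χ) = ∑ i ∈ range n, (i • σ) χ := by
  cases n with
  | zero => simp
  | succ m =>
    rw [map_sum, sum_range_succ, sum_range_succ' (fun i => (i • σ) χ)]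
    simp_rw [← add_apply, ← succ_nsmul', hσ, zero_nsmul]

end AddCommMonoid

theorem sum_range_comp_nsmul_eq_iff [AddCommGroup X] [AddCommGroup M] [IsAddTorsionFree M]
    (σ : AddAut X) {n : ℕ} (hσ : n • σ = 0) (hn : n ≠ 0) (y y' : X →ₗ[ℤ] M) :
    ∑ i ∈ range n, y ∘ₗ ((i • σ : AddAut X) : X →+ X).toIntLinearMap =
        ∑ i ∈ range n, y' ∘ₗ ((i • σ : AddAut X) : X →+ X).toIntLinearMap ↔
      ∀ χ, σ χ = χ → y χ = y' χ := by
  have happly (z : X →ₗ[ℤ] M) (χ : X) :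
      (∑ i ∈ range n, z ∘ₗ ((i • σ : AddAut X) : X →+ X).toIntLinearMap) χ =
        ∑ i ∈ range n, z ((i • σ) χ) := by
    simp only [LinearMap.sum_apply, LinearMap.comp_apply, AddMonoidHom.coe_toIntLinearMap,
      AddMonoidHom.coe_coe]
  constructor
  · intro h χ hχ
    apply nsmul_right_injective hn
    have := LinearMap.congr_fun h χ
    rwa [happly, happly, σ.sum_range_apply_nsmul_apply_of_apply_eq _ hχ,
      σ.sum_range_apply_nsmul_apply_of_apply_eq _ hχ] at this
  · intro h
    ext χ
    rw [happly, happly, ← map_sum, ← map_sum, h _ (σ.apply_sum_range_nsmul_apply hσ χ)]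

end AddAut

theorem quotient_by_commSub_characters_cocharacters_duality_general
    {k : Type*} [Field k] [IsAlgClosed k]
    {X : Type*} [AddCommGroup X] [Module.Free ℤ X]
    (σ : AddAut X) (n : ℕ) (hn : 0 < n) (hord : addOrderOf σ = n) :
    (∀ χ : X,
        (∀ t ∈ commSub k ((σ : AddAut X) : X →+ X), t χ = 0) ↔ σ χ = χ) ∧
    (∀ y y' : X →ₗ[ℤ] ℤ,
        (∀ lam : kˣ,
            ((QuotientAddGroup.mk (cochar y lam) :
                TorusPts X k ⧸ commSub k ((σ : AddAut X) : X →+ X)) =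
              QuotientAddGroup.mk (cochar y' lam)))
          ↔ (∑ i ∈ Finset.range n,
                y ∘ₗ (((i • σ : AddAut X) : X →+ X).toIntLinearMap))
              = (∑ i ∈ Finset.range n,
                y' ∘ₗ (((i • σ : AddAut X) : X →+ X).toIntLinearMap))) ∧
    (∀ (y : X →ₗ[ℤ] ℤ) (χ : X), σ χ = χ →
        (∀ lam : kˣ, (cochar y lam : TorusPts X k) χ = Additive.ofMul (lam ^ (y χ))) ∧
        (∑ i ∈ Finset.range n, y ((i • σ : AddAut X) χ)) = n • y χ) := by
  have hσ : n • σ = 0 := hord ▸ addOrderOf_nsmul_eq_zero σ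
  exact ⟨forall_mem_commSub_apply_eq_zero_iff _,
    fun y y' => (mk_cochar_eq_mk_cochar_iff _ y y').trans
      (σ.sum_range_comp_nsmul_eq_iff hσ hn.ne' y y').symm,
    fun y χ hχ => ⟨fun _ => cochar_apply y _ χ, σ.sum_range_apply_nsmul_apply_of_apply_eq y hχ n⟩⟩

/-- Let `T` be a torus with a finite-order automorphism `σ` of order
`n`.  The quotient map `T → T/[T,σ]` induces:
(a) an isomorphism `X(T/[T,σ]) ≅ X(T)^σ`: a character of `T` factors through the
quotient (i.e. vanishes on `[T,σ]`) iff it is `σ`-invariant;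
(b) an isomorphism `π(Y(T)) ≅ Y(T/[T,σ])`: two cocharacters of `T` induce the same
cocharacter of `T/[T,σ]` iff they have the same image under the averaging map `π`
(equivalently under `1 + σ + ⋯ + σ^{n-1}`);
(c) under these identifications the natural duality is the restriction of the
`ℚ`-linear extension of the duality between `X(T)` and `Y(T)`: for a `σ`-fixed
character `χ` the pairing of `χ` with the class of `y` is computed by
`λ ↦ λ ^ ⟨y, χ⟩`, and `⟨π(y), χ⟩ = ⟨y, χ⟩`, i.e. `∑_{i<n} y (σ^i χ) = n ⬝ y χ`. -/
theorem quotient_by_commSub_characters_cocharacters_duality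
    {k : Type*} [Field k] [IsAlgClosed k]
    {X : Type*} [AddCommGroup X] [Module.Free ℤ X] [Module.Finite ℤ X]
    (σ : AddAut X) (n : ℕ) (hn : 0 < n) (hord : addOrderOf σ = n) :
    (∀ χ : X,
        (∀ t ∈ commSub k ((σ : AddAut X) : X →+ X), t χ = 0) ↔ σ χ = χ) ∧
    (∀ y y' : X →ₗ[ℤ] ℤ,
        (∀ lam : kˣ,
            ((QuotientAddGroup.mk (cochar y lam) :
                TorusPts X k ⧸ commSub k ((σ : AddAut X) : X →+ X)) =
              QuotientAddGroup.mk (cochar y' lam)))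
          ↔ (∑ i ∈ Finset.range n,
                y ∘ₗ (((i • σ : AddAut X) : X →+ X).toIntLinearMap))
              = (∑ i ∈ Finset.range n,
                y' ∘ₗ (((i • σ : AddAut X) : X →+ X).toIntLinearMap))) ∧
    (∀ (y : X →ₗ[ℤ] ℤ) (χ : X), σ χ = χ →
        (∀ lam : kˣ, (cochar y lam : TorusPts X k) χ = Additive.ofMul (lam ^ (y χ))) ∧
        (∑ i ∈ Finset.range n, y ((i • σ : AddAut X) χ)) = n • y χ) :=
  quotient_by_commSub_characters_cocharacters_duality_general σ n hn hord
end

section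
/- Let Φ be an irreducible root system with weight lattice P and root lattice Q, and let σ be an automorphism of Φ (permuting a basis Δ). Then the nonzero elements of P^σ/Q^σ are represented by σ-stable minuscule weights. In particular, if σ fixes no minuscule fundamental weight and Q ⊆ X ⊆ P is any σ-stable intermediate lattice, then Q^σ = X^σ = P^σ. -/
/-- Let `Φ` be an irreducible root system with weight lattice `P`
and root lattice `Q ⊆ P`, and let `σ` be a diagram automorphism of `Φ` acting on `P`
and stabilizing `Q`.  The minuscule weights `M` form a `σ`-stable set of
representatives of the nonzero classes of `P/Q`.  Then the nonzero elements of
`P^σ/Q^σ` are represented by `σ`-stable minuscule weights; in particular, if `σ`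
fixes no minuscule weight, then for any `σ`-stable intermediate lattice
`Q ⊆ X ⊆ P` we have `Q^σ = X^σ = P^σ`, i.e. every `σ`-fixed element of `P` lies
in `Q`. -/
theorem nonzero_classes_of_fixed_lattices_rep_by_minuscule
    {P : Type*} [AddCommGroup P] [Module ℤ P] [Module.Free ℤ P] [Module.Finite ℤ P]
    (σ : P ≃ₗ[ℤ] P) (Q : Submodule ℤ P)
    (hQσ : Q.map (σ : P →ₗ[ℤ] P) = Q)
    (M : Set P)                                     -- the minuscule weights
    (hMσ : ∀ m ∈ M, σ m ∈ M)                        -- `M` is `σ`-stable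
    (hMnotin : ∀ m ∈ M, m ∉ Q)
    -- `M` maps bijectively onto the nonzero classes of `P/Q`:
    (hMrep : ∀ x : P, x ∉ Q → ∃ m ∈ M, x - m ∈ Q)
    (hMinj : ∀ m ∈ M, ∀ m' ∈ M, m - m' ∈ Q → m = m') :
    (∀ x : P, σ x = x → x ∉ Q → ∃ m ∈ M, σ m = m ∧ x - m ∈ Q) ∧
    ((∀ m ∈ M, σ m ≠ m) →
      ∀ X : Submodule ℤ P, Q ≤ X → X.map (σ : P →ₗ[ℤ] P) = X →
        ∀ x : P, σ x = x → x ∈ Q) := by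
  have key : ∀ x : P, σ x = x → x ∉ Q → ∃ m ∈ M, σ m = m ∧ x - m ∈ Q := by
    intro x hx hxQ
    obtain ⟨m, hm, hxm⟩ := hMrep x hxQ
    have hσxm : σ x - σ m ∈ Q := by
      have : σ (x - m) ∈ Q.map (σ : P →ₗ[ℤ] P) :=
        Submodule.mem_map_of_mem hxm
      rw [hQσ] at this
      simpa [map_sub] using this
    rw [hx] at hσxm
    have hσm : σ m = m := by
      refine hMinj _ (hMσ m hm) _ hm ?_
      have := Q.sub_mem hσxm hxm
      simpa using Q.neg_mem this
    exact ⟨m, hm, hσm, hxm⟩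
  refine ⟨key, fun hno X _ _ x hx => ?_⟩
  by_contra hxQ
  obtain ⟨m, hm, hσm, _⟩ := key x hx hxQ
  exact hno m hm hσm
end

section
/- Let X be the character lattice of SL_{2r} of type A_{2r−1} (so X = P, the weight lattice) and σ the order-2 diagram automorphism. More generally, let X be a σ-stable lattice with Q ⊆ X ⊆ P and |P/X| = d. Then Ker(1 + σ | X)/(σ − 1)X is nontrivial (of order 2) if and only if d is even and 2d divides 2r; equivalently, if and only if d is even and d divides r. -/
/-!
Work upstairs in `V = ℤ^{2r}`, where `P = V / ℤ·𝟙` and `σ` is induced by `v ↦ -(v ∘ rev)`.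
Since `Q ⊆ X`, the preimage of `X` in `V` contains `ker Σ` (`Σ` the coordinate sum), so it is
`{v | d ∣ Σ v}` with `d = [P : X]`; in particular `d ∣ 2r`.

Let `ψ u = [u + u ∘ rev]`, so that `(σ - 1) ∘ π = -ψ`. A class `[v]` with `(1 + σ)[v] = 0` has
`v - v ∘ rev` constant, hence zero, and a symmetric vector of even length is some `u + u ∘ rev`;
so `Ker(1 + σ) = im ψ`, `Ker(1 + σ | X) = im ψ ∩ X` and `(σ - 1) X = ψ(π⁻¹ X)`. Pulling both back
along `ψ` and pushing forward along `Σ` (using `Σ (u + u ∘ rev) = 2 Σ u`) turns `[K : I]` into the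
index of `dℤ + rℤ` in `{k | d ∣ 2k}`, which is `2` if `d` is even and `d ∣ r`, and `1` otherwise.
-/

open AddSubgroup (zmultiples)

theorem AddSubgroup.eq_comap_zmultiples_index {G : Type*} [AddGroup G] {f : G →+ ℤ}
    (hf : Function.Surjective f) {H : AddSubgroup G} (hH : f.ker ≤ H) :
    H = (zmultiples (H.index : ℤ)).comap f := by
  obtain ⟨a, ha⟩ := Int.subgroup_cyclic (H.map f)
  rw [← AddSubgroup.zmultiples_eq_closure] at ha
  have hHa : H = (zmultiples a).comap f := by rw [← ha, AddSubgroup.comap_map_eq_self hH]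
  rw [hHa, AddSubgroup.index_comap_of_surjective _ hf, Int.index_zmultiples, Int.zmultiples_natAbs]

theorem Submodule.ne_iff_relIndex_ne_one {M : Type*} [AddCommGroup M] {I K : Submodule ℤ M}
    (hIK : I ≤ K) : I ≠ K ↔ I.toAddSubgroup.relIndex K.toAddSubgroup ≠ 1 := by
  rw [Ne, Ne, AddSubgroup.relIndex_eq_one, Submodule.toAddSubgroup_le, le_antisymm_iff,
    and_iff_right hIK]

namespace Int

theorem relIndex_zmultiples_mul {c : ℤ} (hc : c ≠ 0) (k : ℤ) :
    (zmultiples (c * k)).relIndex (zmultiples c) = k.natAbs := by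
  have hle : zmultiples (c * k) ≤ zmultiples c :=
    AddSubgroup.zmultiples_le_of_mem (Int.mem_zmultiples_iff.mpr (dvd_mul_right c k))
  have h := AddSubgroup.relIndex_mul_index hle
  rw [Int.index_zmultiples, Int.index_zmultiples, Int.natAbs_mul, mul_comm] at h
  exact Nat.mul_left_cancel (Int.natAbs_pos.mpr hc) h

theorem comap_mulLeft_two_zmultiples_of_odd {d : ℤ} (hd : Odd d) :
    (zmultiples d).comap (AddMonoidHom.mulLeft 2) = zmultiples d := by
  ext k
  simp only [AddSubgroup.mem_comap, AddMonoidHom.coe_mulLeft, Int.mem_zmultiples_iff]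
  exact ⟨(Int.isCoprime_two_right.mpr hd).dvd_of_dvd_mul_left, (Dvd.dvd.mul_left · 2)⟩

theorem comap_mulLeft_two_zmultiples_two_mul (c : ℤ) :
    (zmultiples (2 * c)).comap (AddMonoidHom.mulLeft 2) = zmultiples c := by
  ext k
  simp only [AddSubgroup.mem_comap, AddMonoidHom.coe_mulLeft, Int.mem_zmultiples_iff]
  exact mul_dvd_mul_iff_left two_ne_zero

theorem relIndex_zmultiples_sup_comap_mulLeft_two {d r : ℕ} (hd0 : d ≠ 0) (hdr : d ∣ 2 * r) :
    (zmultiples (d : ℤ) ⊔ zmultiples (r : ℤ)).relIndex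
        ((zmultiples (d : ℤ)).comap (AddMonoidHom.mulLeft 2)) =
      if Even d ∧ d ∣ r then 2 else 1 := by
  rw [Int.zmultiples_sup, Int.gcd_natCast_natCast]
  rcases Nat.even_or_odd' d with ⟨c, rfl | rfl⟩
  · obtain ⟨t, rfl⟩ : c ∣ r := (Nat.mul_dvd_mul_iff_left two_pos).mp hdr
    have hc0 : c ≠ 0 := by omega
    have hcond : (Even (2 * c) ∧ 2 * c ∣ c * t) ↔ 2 ∣ t := by
      rw [and_iff_right (even_two_mul c), mul_comm 2 c,
        Nat.mul_dvd_mul_iff_left (Nat.pos_of_ne_zero hc0)]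
    have hgcd : (((2 * c).gcd (c * t) : ℕ) : ℤ) = c * (Nat.gcd 2 t : ℕ) := by
      rw [mul_comm 2 c, Nat.gcd_mul_left, Nat.cast_mul]
    simp only [hcond]
    rw [hgcd, Nat.cast_mul, Nat.cast_ofNat, comap_mulLeft_two_zmultiples_two_mul,
      relIndex_zmultiples_mul (by exact_mod_cast hc0), Int.natAbs_natCast]
    rcases Nat.even_or_odd t with ht | ht
    · rw [Nat.gcd_eq_left (even_iff_two_dvd.mp ht), if_pos (even_iff_two_dvd.mp ht)]
    · rw [Nat.coprime_two_left.mpr ht,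
        if_neg (Nat.not_even_iff_odd.mpr ht ∘ even_iff_two_dvd.mpr)]
  · have hodd := odd_two_mul_add_one c
    have hdr' : 2 * c + 1 ∣ r := (Nat.coprime_two_right.mpr hodd).dvd_of_dvd_mul_left hdr
    rw [Nat.gcd_eq_left hdr', comap_mulLeft_two_zmultiples_of_odd (by exact_mod_cast hodd.natCast),
      AddSubgroup.relIndex_self, if_neg (fun h => Nat.not_even_iff_odd.mpr hodd h.1)]

end Int

namespace TypeA

open Submodule

def coordSum (n : ℕ) : (Fin n → ℤ) →ₗ[ℤ] ℤ :=
  ∑ i : Fin n, LinearMap.proj (R := ℤ) (φ := fun _ => ℤ) i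

def symmetrize (n : ℕ) : (Fin n → ℤ) →ₗ[ℤ] Fin n → ℤ :=
  LinearMap.id + LinearMap.funLeft ℤ ℤ Fin.rev

abbrev constSpan (n : ℕ) : Submodule ℤ (Fin n → ℤ) := span ℤ {fun _ => 1}

def symmetrizeMod (n : ℕ) : (Fin n → ℤ) →ₗ[ℤ] (Fin n → ℤ) ⧸ constSpan n :=
  (constSpan n).mkQ ∘ₗ symmetrize n

variable {n : ℕ}

@[simp]
theorem coordSum_apply (v : Fin n → ℤ) : coordSum n v = ∑ i, v i := by
  simp [coordSum]

theorem coordSum_surjective (hn : n ≠ 0) : Function.Surjective (coordSum n) := fun y =>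
  ⟨Pi.single ⟨0, Nat.pos_of_ne_zero hn⟩ y, by simp⟩

theorem coordSum_const (c : ℤ) : coordSum n (fun _ => c) = n * c := by
  simp

@[simp]
theorem symmetrize_apply (u : Fin n → ℤ) (i : Fin n) : symmetrize n u i = u i + u i.rev := rfl

theorem funLeft_rev_comp_symmetrize :
    LinearMap.funLeft ℤ ℤ Fin.rev ∘ₗ symmetrize n = symmetrize n := by
  ext u i
  simp [add_comm]

theorem coordSum_symmetrize (u : Fin n → ℤ) :
    coordSum n (symmetrize n u) = 2 * coordSum n u := by
  simp [Finset.sum_add_distrib, Fin.rev_bijective.sum_comp u, two_mul]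

theorem mem_constSpan {v : Fin n → ℤ} : v ∈ constSpan n ↔ ∃ c : ℤ, v = fun _ => c := by
  simp [mem_span_singleton, eq_comm, funext_iff]

theorem exists_symmetrize_eq {r : ℕ} {v : Fin (2 * r) → ℤ} (hv : ∀ i, v i.rev = v i) :
    ∃ u, symmetrize (2 * r) u = v := by
  refine ⟨fun i => if (i : ℕ) < r then v i else 0, funext fun i => ?_⟩
  have := Fin.val_rev i
  by_cases hi : (i : ℕ) < r
  · rw [symmetrize_apply, if_pos hi, if_neg (by omega), add_zero]
  · rw [symmetrize_apply, if_neg hi, if_pos (by omega), zero_add, hv]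

theorem coordSum_eq_of_symmetrize_eq_const {r : ℕ} {u : Fin (2 * r) → ℤ} {c : ℤ}
    (h : symmetrize (2 * r) u = fun _ => c) : coordSum (2 * r) u = r * c := by
  have h2 := coordSum_symmetrize u
  rw [h, coordSum_const, Nat.cast_mul, Nat.cast_ofNat, mul_assoc] at h2
  exact (mul_left_cancel₀ two_ne_zero h2).symm

theorem map_coordSum_ker_symmetrizeMod (r : ℕ) :
    (LinearMap.ker (symmetrizeMod (2 * r))).toAddSubgroup.map (coordSum (2 * r)).toAddMonoidHom =
      zmultiples (r : ℤ) := by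
  ext y
  simp only [AddSubgroup.mem_map, LinearMap.ker_toAddSubgroup, AddMonoidHom.mem_ker,
    LinearMap.toAddMonoidHom_coe, Int.mem_zmultiples_iff]
  constructor
  · rintro ⟨u, hu, rfl⟩
    obtain ⟨c, hc⟩ := mem_constSpan.mp ((Quotient.mk_eq_zero _).mp hu)
    exact ⟨c, coordSum_eq_of_symmetrize_eq_const hc⟩
  · rintro ⟨c, rfl⟩
    obtain ⟨u, hu⟩ := exists_symmetrize_eq (v := fun _ => c) fun _ => rfl
    refine ⟨u, ?_, coordSum_eq_of_symmetrize_eq_const hu⟩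
    rw [symmetrizeMod, LinearMap.comp_apply, hu, mkQ_apply, Quotient.mk_eq_zero]
    exact mem_constSpan.mpr ⟨c, rfl⟩

theorem toAddSubgroup_comap_mkQ_eq (hn : n ≠ 0) {X : Submodule ℤ ((Fin n → ℤ) ⧸ constSpan n)}
    (hX : (LinearMap.ker (coordSum n)).map (constSpan n).mkQ ≤ X) :
    (X.comap (constSpan n).mkQ).toAddSubgroup =
      (zmultiples (Nat.card (((Fin n → ℤ) ⧸ constSpan n) ⧸ X) : ℤ)).comap
        (coordSum n).toAddMonoidHom := by
  have hindex : Nat.card (((Fin n → ℤ) ⧸ constSpan n) ⧸ X) =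
      (X.comap (constSpan n).mkQ).toAddSubgroup.index :=
    (AddSubgroup.index_comap_of_surjective X.toAddSubgroup
      (f := (constSpan n).mkQ.toAddMonoidHom) (mkQ_surjective _)).symm
  rw [hindex]
  exact AddSubgroup.eq_comap_zmultiples_index (coordSum_surjective hn)
    ((toAddSubgroup_le _ _).mpr (map_le_iff_le_comap.mp hX))

theorem dvd_of_toAddSubgroup_comap_mkQ_eq {d : ℕ} {X : Submodule ℤ ((Fin n → ℤ) ⧸ constSpan n)}
    (hX : (X.comap (constSpan n).mkQ).toAddSubgroup =
      (zmultiples (d : ℤ)).comap (coordSum n).toAddMonoidHom) :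
    d ∣ n := by
  have h := SetLike.ext_iff.mp hX fun _ => 1
  simp only [mem_toAddSubgroup, mem_comap, AddSubgroup.mem_comap, LinearMap.toAddMonoidHom_coe,
    coordSum_const, mul_one, Int.mem_zmultiples_iff, Int.natCast_dvd_natCast, mkQ_apply] at h
  refine h.mp ?_
  rw [(Quotient.mk_eq_zero (constSpan n)).mpr (subset_span rfl)]
  exact X.zero_mem

section Involution

variable {τ : ((Fin n → ℤ) ⧸ constSpan n) →ₗ[ℤ] (Fin n → ℤ) ⧸ constSpan n}

theorem add_id_comp_mkQ
    (hτ : τ ∘ₗ (constSpan n).mkQ = -((constSpan n).mkQ ∘ₗ LinearMap.funLeft ℤ ℤ Fin.rev)) :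
    (τ + LinearMap.id) ∘ₗ (constSpan n).mkQ =
      (constSpan n).mkQ ∘ₗ (LinearMap.id - LinearMap.funLeft ℤ ℤ Fin.rev) := by
  rw [LinearMap.add_comp, hτ, LinearMap.id_comp, LinearMap.comp_sub, LinearMap.comp_id]
  abel

theorem sub_id_comp_mkQ
    (hτ : τ ∘ₗ (constSpan n).mkQ = -((constSpan n).mkQ ∘ₗ LinearMap.funLeft ℤ ℤ Fin.rev)) :
    (τ - LinearMap.id) ∘ₗ (constSpan n).mkQ = -symmetrizeMod n := by
  rw [LinearMap.sub_comp, hτ, LinearMap.id_comp, symmetrizeMod, symmetrize, LinearMap.comp_add,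
    LinearMap.comp_id]
  abel

theorem map_sub_id_eq_map_symmetrizeMod
    (hτ : τ ∘ₗ (constSpan n).mkQ = -((constSpan n).mkQ ∘ₗ LinearMap.funLeft ℤ ℤ Fin.rev))
    (X : Submodule ℤ ((Fin n → ℤ) ⧸ constSpan n)) :
    X.map (τ - LinearMap.id) = (X.comap (constSpan n).mkQ).map (symmetrizeMod n) := by
  conv_lhs => rw [← map_comap_eq_of_surjective (constSpan n).mkQ_surjective X]
  rw [← map_comp, sub_id_comp_mkQ hτ, Submodule.map_neg]

end Involution

theorem ker_add_id_eq_range_symmetrizeMod {r : ℕ}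
    {τ : ((Fin (2 * r) → ℤ) ⧸ constSpan (2 * r)) →ₗ[ℤ] (Fin (2 * r) → ℤ) ⧸ constSpan (2 * r)}
    (hτ : τ ∘ₗ (constSpan _).mkQ = -((constSpan _).mkQ ∘ₗ LinearMap.funLeft ℤ ℤ Fin.rev)) :
    LinearMap.ker (τ + LinearMap.id) = LinearMap.range (symmetrizeMod (2 * r)) := by
  refine le_antisymm (fun x hx => ?_) (LinearMap.range_le_ker_iff.mpr ?_)
  · obtain ⟨v, rfl⟩ := (constSpan (2 * r)).mkQ_surjective x
    rw [LinearMap.mem_ker, ← LinearMap.comp_apply, add_id_comp_mkQ hτ, LinearMap.comp_apply,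
      mkQ_apply, Quotient.mk_eq_zero, mem_constSpan] at hx
    obtain ⟨c, hc⟩ := hx
    -- evaluating `v - v ∘ rev = c` at `i` and at `rev i` gives `c = -c`
    have hv : ∀ i, v i.rev = v i := fun i => by
      have h1 := congrFun hc i
      have h2 := congrFun hc i.rev
      simp only [LinearMap.sub_apply, LinearMap.id_apply, LinearMap.funLeft_apply, Pi.sub_apply,
        Fin.rev_rev] at h1 h2
      omega
    obtain ⟨u, rfl⟩ := exists_symmetrize_eq hv
    exact ⟨u, rfl⟩
  · rw [symmetrizeMod, ← LinearMap.comp_assoc, add_id_comp_mkQ hτ, LinearMap.comp_assoc,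
      LinearMap.sub_comp, LinearMap.id_comp, funLeft_rev_comp_symmetrize, sub_self,
      LinearMap.comp_zero]

section Lattice

variable {r : ℕ} {X : Submodule ℤ ((Fin (2 * r) → ℤ) ⧸ constSpan (2 * r))} {d : ℕ}

theorem toAddSubgroup_comap_symmetrizeMod
    (hX : (X.comap (constSpan (2 * r)).mkQ).toAddSubgroup =
      (zmultiples (d : ℤ)).comap (coordSum (2 * r)).toAddMonoidHom) :
    (X.comap (symmetrizeMod (2 * r))).toAddSubgroup =
      ((zmultiples (d : ℤ)).comap (AddMonoidHom.mulLeft 2)).comap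
        (coordSum (2 * r)).toAddMonoidHom := by
  ext u
  have h := SetLike.ext_iff.mp hX (symmetrize (2 * r) u)
  simp only [mem_toAddSubgroup, mem_comap, AddSubgroup.mem_comap, LinearMap.toAddMonoidHom_coe,
    coordSum_symmetrize] at h
  simpa only [mem_toAddSubgroup, mem_comap, AddSubgroup.mem_comap, LinearMap.toAddMonoidHom_coe,
    AddMonoidHom.coe_mulLeft, symmetrizeMod, LinearMap.comp_apply] using h

theorem toAddSubgroup_comap_map_symmetrizeMod (hr : r ≠ 0)
    (hX : (X.comap (constSpan (2 * r)).mkQ).toAddSubgroup =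
      (zmultiples (d : ℤ)).comap (coordSum (2 * r)).toAddMonoidHom) :
    (((X.comap (constSpan (2 * r)).mkQ).map (symmetrizeMod (2 * r))).comap
        (symmetrizeMod (2 * r))).toAddSubgroup =
      (zmultiples (d : ℤ) ⊔ zmultiples (r : ℤ)).comap (coordSum (2 * r)).toAddMonoidHom := by
  have hS : Function.Surjective (coordSum (2 * r)).toAddMonoidHom :=
    coordSum_surjective (by omega)
  rw [comap_map_eq, sup_toAddSubgroup, hX, ← map_coordSum_ker_symmetrizeMod r]
  conv_rhs => rw [← AddSubgroup.map_comap_eq_self_of_surjective hS (zmultiples (d : ℤ)),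
    ← AddSubgroup.map_sup]
  exact (AddSubgroup.comap_map_eq_self (le_sup_of_le_left (AddSubgroup.ker_le_comap _ _))).symm

theorem map_symmetrizeMod_le
    (hX : (X.comap (constSpan (2 * r)).mkQ).toAddSubgroup =
      (zmultiples (d : ℤ)).comap (coordSum (2 * r)).toAddMonoidHom) :
    (X.comap (constSpan (2 * r)).mkQ).map (symmetrizeMod (2 * r)) ≤ X := by
  rw [map_le_iff_le_comap, ← toAddSubgroup_le, toAddSubgroup_comap_symmetrizeMod hX, hX]
  refine AddSubgroup.comap_mono fun k hk => ?_
  simpa only [AddSubgroup.mem_comap, AddMonoidHom.coe_mulLeft, smul_eq_mul] using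
    AddSubgroup.zsmul_mem _ hk 2

theorem relIndex_map_symmetrizeMod (hr : r ≠ 0)
    (hX : (X.comap (constSpan (2 * r)).mkQ).toAddSubgroup =
      (zmultiples (d : ℤ)).comap (coordSum (2 * r)).toAddMonoidHom) :
    ((X.comap (constSpan (2 * r)).mkQ).map (symmetrizeMod (2 * r))).toAddSubgroup.relIndex
        (LinearMap.range (symmetrizeMod (2 * r)) ⊓ X).toAddSubgroup =
      (zmultiples (d : ℤ) ⊔ zmultiples (r : ℤ)).relIndex
        ((zmultiples (d : ℤ)).comap (AddMonoidHom.mulLeft 2)) := by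
  have hS : Function.Surjective (coordSum (2 * r)).toAddMonoidHom :=
    coordSum_surjective (by omega)
  have hψ (A B : Submodule ℤ ((Fin (2 * r) → ℤ) ⧸ constSpan (2 * r))) :
      (A.comap (symmetrizeMod (2 * r))).toAddSubgroup.relIndex
          (B.comap (symmetrizeMod (2 * r))).toAddSubgroup =
        A.toAddSubgroup.relIndex (LinearMap.range (symmetrizeMod (2 * r)) ⊓ B).toAddSubgroup := by
    rw [← map_comap_eq]
    exact AddSubgroup.relIndex_comap A.toAddSubgroup (symmetrizeMod (2 * r)).toAddMonoidHom _
  rw [← hψ, toAddSubgroup_comap_map_symmetrizeMod hr hX, toAddSubgroup_comap_symmetrizeMod hX,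
    AddSubgroup.relIndex_comap, AddSubgroup.map_comap_eq_self_of_surjective hS]

end Lattice

end TypeA

open TypeA

theorem ker_one_add_sigma_mod_image_A_odd_general
    (r : ℕ) (hr : 1 ≤ r)
    (D : Submodule ℤ (Fin (2 * r) → ℤ))
    (hD : D = Submodule.span ℤ {fun _ => (1 : ℤ)})
    (σ₀ : (Fin (2 * r) → ℤ) →ₗ[ℤ] (Fin (2 * r) → ℤ))
    (hσ₀ : ∀ (v : Fin (2 * r) → ℤ) (i : Fin (2 * r)), σ₀ v i = - v i.rev)
    (τ : ((Fin (2 * r) → ℤ) ⧸ D) →ₗ[ℤ] ((Fin (2 * r) → ℤ) ⧸ D))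
    (hτ : ∀ v : Fin (2 * r) → ℤ,
      τ (Submodule.Quotient.mk v) = Submodule.Quotient.mk (σ₀ v))
    (Q X : Submodule ℤ ((Fin (2 * r) → ℤ) ⧸ D))
    (hQ : Q = Submodule.map D.mkQ
      (LinearMap.ker (∑ i : Fin (2 * r), LinearMap.proj (R := ℤ) (φ := fun _ => ℤ) i)))
    (hQX : Q ≤ X)
    (d : ℕ) (hd : d = Nat.card (((Fin (2 * r) → ℤ) ⧸ D) ⧸ X))
    (K I : Submodule ℤ ((Fin (2 * r) → ℤ) ⧸ D))
    (hK : K = LinearMap.ker (τ + LinearMap.id) ⊓ X)       -- Ker(1 + σ | X)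
    (hI : I = Submodule.map (τ - LinearMap.id) X) :       -- (σ - 1) X
    (I ≠ K ↔ (Even d ∧ d ∣ r)) ∧
    (I ≠ K → Nat.card (↥K ⧸ Submodule.comap K.subtype I) = 2) := by
  subst hD hQ hd hK hI
  have hτ' : τ ∘ₗ (constSpan _).mkQ = -((constSpan _).mkQ ∘ₗ LinearMap.funLeft ℤ ℤ Fin.rev) :=
    LinearMap.ext fun v => by
      simp [hτ, show σ₀ v = -(v ∘ Fin.rev) from funext (hσ₀ v)]
      rfl
  have hX := toAddSubgroup_comap_mkQ_eq (by omega) hQX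
  have hdr := dvd_of_toAddSubgroup_comap_mkQ_eq hX
  rw [ker_add_id_eq_range_symmetrizeMod hτ', map_sub_id_eq_map_symmetrizeMod hτ']
  have hIK := le_inf LinearMap.map_le_range (map_symmetrizeMod_le hX)
  have hrel := (relIndex_map_symmetrizeMod (by omega) hX).trans
    (Int.relIndex_zmultiples_sup_comap_mulLeft_two (Nat.pos_of_dvd_of_pos hdr (by omega)).ne' hdr)
  have hne := Submodule.ne_iff_relIndex_ne_one hIK
  rw [hrel] at hne
  -- `Nat.card (K ⧸ I.comap K.subtype)` is `I.relIndex K` by definition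
  refine ⟨hne.trans ?_, fun h => hrel.trans ?_⟩ <;> split_ifs with hc
  · simpa using hc
  · simpa using hc
  · rfl
  · exact absurd (hne.mp h) (by simp [hc])

/-- Realize the weight lattice of type `A_{2r-1}` as
`P = ℤ^{2r} / ℤ·(1,…,1)` and the root lattice `Q` as the image of the sum-zero
sublattice; the nontrivial diagram automorphism is induced by `v ↦ -(reverse v)`.
Let `X` be a `σ`-stable lattice with `Q ⊆ X ⊆ P` and `d = |P/X|`.  Then
`Ker(1 + σ | X)/(σ - 1)X` is nontrivial if and only if `d` is even and `d ∣ r`,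
in which case it has order 2. -/
theorem ker_one_add_sigma_mod_image_A_odd
    (r : ℕ) (hr : 1 ≤ r)
    (D : Submodule ℤ (Fin (2 * r) → ℤ))
    (hD : D = Submodule.span ℤ {fun _ => (1 : ℤ)})
    (σ₀ : (Fin (2 * r) → ℤ) →ₗ[ℤ] (Fin (2 * r) → ℤ))
    (hσ₀ : ∀ (v : Fin (2 * r) → ℤ) (i : Fin (2 * r)), σ₀ v i = - v i.rev)
    (τ : ((Fin (2 * r) → ℤ) ⧸ D) →ₗ[ℤ] ((Fin (2 * r) → ℤ) ⧸ D))
    (hτ : ∀ v : Fin (2 * r) → ℤ,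
      τ (Submodule.Quotient.mk v) = Submodule.Quotient.mk (σ₀ v))
    (Q X : Submodule ℤ ((Fin (2 * r) → ℤ) ⧸ D))
    (hQ : Q = Submodule.map D.mkQ
      (LinearMap.ker (∑ i : Fin (2 * r), LinearMap.proj (R := ℤ) (φ := fun _ => ℤ) i)))
    (hQX : Q ≤ X) (hXσ : X.map τ = X)
    (d : ℕ) (hd : d = Nat.card (((Fin (2 * r) → ℤ) ⧸ D) ⧸ X))
    (K I : Submodule ℤ ((Fin (2 * r) → ℤ) ⧸ D))
    (hK : K = LinearMap.ker (τ + LinearMap.id) ⊓ X)       -- Ker(1 + σ | X)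
    (hI : I = Submodule.map (τ - LinearMap.id) X) :       -- (σ - 1) X
    (I ≠ K ↔ (Even d ∧ d ∣ r)) ∧
    (I ≠ K → Nat.card (↥K ⧸ Submodule.comap K.subtype I) = 2) :=
  ker_one_add_sigma_mod_image_A_odd_general r hr D hD σ₀ hσ₀ τ hτ Q X hQ hQX d hd K I hK hI
end
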